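/- On the reference tetrahedron K³, for each edge e_k = [k1,k2] and each integer i ≥ 0, the edge-based interior function Φ^{t,i}_{e[k1,k2]} = C_i λ_{k1} λ_{k2} (1−λ_{k1})^i P_i^{(1,2)}(2λ_{k2}/(1−λ_{k1}) − 1) τ^{e_k}/|τ^{e_k}| (with C_i = (i+3)√((2i+4)(2i+5)(2i+7)/(i+1))) satisfies: (i) its normal component vanishes at every point of each of the four faces of K³, i.e. n^{f_j} · Φ^{t,i}_{e[k1,k2]} = 0 on f_j for every j ∈ {0,1,2,3}; and (ii) its tangential component vanishes on the other five edges, i.e. τ^{e_j} · Φ^{t,i}_{e[k1,k2]} = 0 at every point of the edge e_j whenever e_j ≠ e_k. -/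

import Mathlib

open MeasureTheory
open scoped BigOperators

noncomputable section

/-- Vertices of the reference tetrahedron:
`v0 = (0,0,0)`, `v1 = (1,0,0)`, `v2 = (0,1,0)`, `v3 = (0,0,1)`. -/
def vtx : Fin 4 → Fin 3 → ℝ := ![![0,0,0], ![1,0,0], ![0,1,0], ![0,0,1]]

/-- Barycentric coordinates `λ0 = 1−ξ−η−ζ`, `λ1 = ξ`, `λ2 = η`, `λ3 = ζ`. -/
def lam : Fin 4 → (Fin 3 → ℝ) → ℝ :=
  ![fun p => 1 - p 0 - p 1 - p 2, fun p => p 0, fun p => p 1, fun p => p 2]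

/-- The (constant) gradients `∇λ_i`. -/
def gradLam : Fin 4 → Fin 3 → ℝ := ![![-1,-1,-1], ![1,0,0], ![0,1,0], ![0,0,1]]

/-- The reference tetrahedron `K³ = {(ξ,η,ζ) : ξ,η,ζ ≥ 0, ξ+η+ζ ≤ 1}`. -/
def K3 : Set (Fin 3 → ℝ) := {p | 0 ≤ p 0 ∧ 0 ≤ p 1 ∧ 0 ≤ p 2 ∧ p 0 + p 1 + p 2 ≤ 1}

/-- Cross product in ℝ³. -/
def cross3 (u v : Fin 3 → ℝ) : Fin 3 → ℝ :=
  ![u 1 * v 2 - u 2 * v 1, u 2 * v 0 - u 0 * v 2, u 0 * v 1 - u 1 * v 0]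

/-- Euclidean norm in ℝ³. -/
def norm3 (u : Fin 3 → ℝ) : ℝ := Real.sqrt (∑ i, u i ^ 2)

/-- Euclidean dot product in ℝ³. -/
def dot3 (u v : Fin 3 → ℝ) : ℝ := ∑ i, u i * v i

/-- The unit vector in the direction of `u`. -/
def unitV (u : Fin 3 → ℝ) : Fin 3 → ℝ := (norm3 u)⁻¹ • u

/-- The outward unit normal of the face `f_j` of `K³` opposite the vertex
`v_j` (that face lies in the plane `λ_j = 0`): `n^{f_j} = −∇λ_j / |∇λ_j|`. -/
def nFace (j : Fin 4) : Fin 3 → ℝ := (norm3 (gradLam j))⁻¹ • (-(gradLam j))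

/-- The classical (un-normalized) Jacobi polynomial `P_n^{(a,b)}` in homogenized
(cleared-denominator) form: `jacobiHom n a b u w = w^n P_n^{(a,b)}(u/w)` for
`w ≠ 0`, via the explicit sum
`P_n^{(a,b)}(x) = ∑_{s} C(n+a, n−s) C(n+b, s) ((x−1)/2)^s ((x+1)/2)^{n−s}`. -/
def jacobiHom (n a b : ℕ) (u w : ℝ) : ℝ :=
  ∑ k ∈ Finset.range (n+1),
    (((n+a).choose (n-k) : ℝ)) * (((n+b).choose k : ℝ)) *
      ((u - w)/2)^k * ((u + w)/2)^(n-k)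

/-- The degree-`n` Legendre polynomial `ℓ_n` (normalized so `ℓ_n(1) = 1`). -/
def legendre (n : ℕ) (x : ℝ) : ℝ := jacobiHom n 0 0 x 1

/-- Normalization constant `C_i = (i+3)√((2i+4)(2i+5)(2i+7)/(i+1))`. -/
def CEdgeTet (i : ℕ) : ℝ :=
  ((i : ℝ) + 3) * Real.sqrt ((((2*i+4)*(2*i+5)*(2*i+7) : ℕ) : ℝ) / ((i : ℝ) + 1))

/-- Edge-based interior function of the tetrahedral element
`Φ^{t,i}_{e[k1,k2]} = C_i λ_{k1} λ_{k2} (1−λ_{k1})^i P_i^{(1,2)}(2λ_{k2}/(1−λ_{k1}) − 1)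
τ^{e_k}/|τ^{e_k}|`. -/
def PhiEdgeTet (k1 k2 : Fin 4) (i : ℕ) (p : Fin 3 → ℝ) : Fin 3 → ℝ :=
  (CEdgeTet i * lam k1 p * lam k2 p *
    jacobiHom i 1 2 (2 * lam k2 p - (1 - lam k1 p)) (1 - lam k1 p)) •
  unitV (vtx k2 - vtx k1)

/-!
`Φ^{t,i}_{e[k1,k2]}` is a scalar multiple of the tangent `τ^{e_k}` whose scalar factor contains
`λ_{k1} λ_{k2}`. On a face `λ_j = 0` with `j ∈ {k1, k2}` that factor vanishes; for the other two
faces the normal is parallel to `∇λ_j`, and `∇λ_j · τ^{e_k} = λ_j(v_{k2}) − λ_j(v_{k1}) = 0`.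
An edge other than `e_k` misses one of `v_{k1}`, `v_{k2}`, and the corresponding barycentric
coordinate vanishes along it, since it is affine and vanishes at both endpoints.
-/

lemma dot3_smul_right (c : ℝ) (u v : Fin 3 → ℝ) : dot3 u (c • v) = c * dot3 u v := by
  simp only [dot3, Pi.smul_apply, smul_eq_mul, Finset.mul_sum]
  exact Finset.sum_congr rfl fun _ _ => by ring

lemma dot3_smul_left (c : ℝ) (u v : Fin 3 → ℝ) : dot3 (c • u) v = c * dot3 u v := by
  simp only [dot3, Pi.smul_apply, smul_eq_mul, Finset.mul_sum]
  exact Finset.sum_congr rfl fun _ _ => by ring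

lemma lam_vtx (j k : Fin 4) : lam j (vtx k) = if j = k then 1 else 0 := by
  fin_cases j <;> fin_cases k <;> simp [lam, vtx]

lemma lam_affineCombination (j : Fin 4) (p q : Fin 3 → ℝ) {a b : ℝ} (hab : a + b = 1) :
    lam j (a • p + b • q) = a * lam j p + b * lam j q := by
  obtain rfl : b = 1 - a := by linarith
  fin_cases j <;> simp [lam]
  ring

lemma dot3_gradLam_sub (j : Fin 4) (p q : Fin 3 → ℝ) :
    dot3 (gradLam j) (q - p) = lam j q - lam j p := by
  fin_cases j <;> simp [dot3, gradLam, lam, Fin.sum_univ_three]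
  ring

lemma dot3_nFace_vtx_sub_vtx {j k1 k2 : Fin 4} (h1 : j ≠ k1) (h2 : j ≠ k2) :
    dot3 (nFace j) (vtx k2 - vtx k1) = 0 := by
  have hgrad : dot3 (gradLam j) (vtx k2 - vtx k1) = 0 := by
    simp [dot3_gradLam_sub, lam_vtx, h1, h2]
  have hneg : -gradLam j = (-1 : ℝ) • gradLam j := (neg_one_smul ℝ _).symm
  rw [nFace, dot3_smul_left, hneg, dot3_smul_left, hgrad, mul_zero, mul_zero]

lemma lam_eq_zero_of_mem_segment {m j1 j2 : Fin 4} (h1 : m ≠ j1) (h2 : m ≠ j2)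
    {p : Fin 3 → ℝ} (hp : p ∈ segment ℝ (vtx j1) (vtx j2)) : lam m p = 0 := by
  obtain ⟨a, b, -, -, hab, rfl⟩ := hp
  simp [lam_affineCombination m _ _ hab, lam_vtx, h1, h2]

lemma dot3_PhiEdgeTet (k1 k2 : Fin 4) (i : ℕ) (u p : Fin 3 → ℝ) :
    dot3 u (PhiEdgeTet k1 k2 i p) =
      lam k1 p * lam k2 p * (CEdgeTet i *
        jacobiHom i 1 2 (2 * lam k2 p - (1 - lam k1 p)) (1 - lam k1 p) *
          dot3 u (unitV (vtx k2 - vtx k1))) := by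
  rw [PhiEdgeTet, dot3_smul_right]
  ring

lemma dot3_PhiEdgeTet_eq_zero_of_lam {k1 k2 : Fin 4} (i : ℕ) (u : Fin 3 → ℝ)
    {p : Fin 3 → ℝ} (h : lam k1 p = 0 ∨ lam k2 p = 0) : dot3 u (PhiEdgeTet k1 k2 i p) = 0 := by
  rw [dot3_PhiEdgeTet]
  rcases h with h | h <;> simp [h]

lemma dot3_PhiEdgeTet_eq_zero_of_dot3_tangent {k1 k2 : Fin 4} (i : ℕ) {u : Fin 3 → ℝ}
    (h : dot3 u (vtx k2 - vtx k1) = 0) (p : Fin 3 → ℝ) : dot3 u (PhiEdgeTet k1 k2 i p) = 0 := by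
  rw [dot3_PhiEdgeTet, unitV, dot3_smul_right, h]
  ring

lemma edge_ne_misses_vertex :
    ∀ k1 k2 j1 j2 : Fin 4, k1 < k2 → j1 < j2 → (j1, j2) ≠ (k1, k2) →
      (k1 ≠ j1 ∧ k1 ≠ j2) ∨ (k2 ≠ j1 ∧ k2 ≠ j2) := by
  decide

/-- each edge-based interior function of the tetrahedral element
(i) has vanishing normal component at every point of each of the four faces of
`K³`, and (ii) has vanishing tangential component at every point of each edge
other than its associated edge `e_k = [k1,k2]`. -/
theorem stmt15 : ∀ (k1 k2 : Fin 4), k1 < k2 → ∀ i : ℕ,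
    (∀ j : Fin 4, ∀ p ∈ K3, lam j p = 0 →
      dot3 (nFace j) (PhiEdgeTet k1 k2 i p) = 0) ∧
    (∀ (j1 j2 : Fin 4), j1 < j2 → (j1, j2) ≠ (k1, k2) →
      ∀ p ∈ segment ℝ (vtx j1) (vtx j2),
        dot3 (vtx j2 - vtx j1) (PhiEdgeTet k1 k2 i p) = 0) := by
  intro k1 k2 hk i
  refine ⟨fun j p _ hj => ?_, fun j1 j2 hj hne p hp => ?_⟩
  · by_cases h1 : j = k1
    · exact dot3_PhiEdgeTet_eq_zero_of_lam i _ (.inl (h1 ▸ hj))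
    by_cases h2 : j = k2
    · exact dot3_PhiEdgeTet_eq_zero_of_lam i _ (.inr (h2 ▸ hj))
    exact dot3_PhiEdgeTet_eq_zero_of_dot3_tangent i (dot3_nFace_vtx_sub_vtx h1 h2) p
  · apply dot3_PhiEdgeTet_eq_zero_of_lam
    rcases edge_ne_misses_vertex k1 k2 j1 j2 hk hj hne with ⟨h1, h2⟩ | ⟨h1, h2⟩
    · exact .inl (lam_eq_zero_of_mem_segment h1 h2 hp)
    · exact .inr (lam_eq_zero_of_mem_segment h1 h2 hp)
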